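/- Let X ∈ ℂ^{m×n}, Y ∈ ℂ^{m×n'}, and let Σ̄ be the truncated (r, ε, φ)-approximate importance sketch of X (rows with index in Γ zeroed out). Then for any δ > 0, with probability at least 1 − δ, ‖X† Σ̄† Σ̄ Y − X† Y‖_F ≤ (2√(2ε) + √(2/(rδ)))·√φ·‖X‖_F·‖Y‖_F. -/

import Mathlib

/-!
Sampling row `j` with probability `p̃ j` and scaling it by `1 / √(r p j)` makes `Xᴴ Σ̄ᴴ Σ̄ Y`
the average of `r` i.i.d. copies of the rank-one matrix `A j = (p j)⁻¹ X_jᴴ Y_j` (zero on `Γ`).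
Its mean differs from `Xᴴ Y` by reweighting the kept rows by `p̃ j / p j`, which costs
`√(2ε) √φ ‖X‖ ‖Y‖` since `∑ |p̃ j - p j| ≤ 2ε` and every kept row has
`√(2ε) ‖A j‖ ≤ √φ ‖X‖ ‖Y‖`, and by dropping the rows of `Γ`, which costs `√(2φε) ‖X‖ ‖Y‖` by
the defining inequality of `Γ`. The same two row bounds give `E ‖A‖² ≤ 2φ ‖X‖² ‖Y‖²`, so the
centred sum of the `r` samples has second moment at most `2rφ ‖X‖² ‖Y‖²`, and Markov's
inequality for its square yields the deviation term `√(2 / (rδ)) √φ ‖X‖ ‖Y‖`.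
-/

open Finset Matrix

/-- Euclidean norm of row `i` of a matrix. -/
noncomputable def rowNorm {m n : ℕ} (A : Matrix (Fin m) (Fin n) ℂ) (i : Fin m) : ℝ :=
  Real.sqrt (∑ j, ‖A i j‖ ^ 2)

/-- Frobenius norm of a matrix. -/
noncomputable def frobNorm {m n : ℕ} (A : Matrix (Fin m) (Fin n) ℂ) : ℝ :=
  Real.sqrt (∑ i, ∑ j, ‖A i j‖ ^ 2)

/-- The truncated sketch matrix: row `i` equals `e_{s i}/√(r·p(s i))` when `p (s i) > 0` and
the sampled index `s i` does not lie in the truncation set `Γ`, and is zero otherwise. -/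
noncomputable def truncSketch {m : ℕ} (r : ℕ) (p : Fin m → ℝ) (Γ : Fin m → Prop)
    [DecidablePred Γ] (s : Fin r → Fin m) : Matrix (Fin r) (Fin m) ℂ :=
  Matrix.of fun i j =>
    if j = s i ∧ 0 < p (s i) ∧ ¬ Γ (s i) then ((1 / Real.sqrt (r * p (s i)) : ℝ) : ℂ) else 0


section IidSums

variable {ι : Type*} [Fintype ι] {E : Type*} [NormedAddCommGroup E] [InnerProductSpace ℝ E]

theorem sum_prod_eq_one {q : ι → ℝ} (hq : ∑ j, q j = 1) (r : ℕ) :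
    ∑ s : Fin r → ι, ∏ i, q (s i) = 1 := by
  rw [← Fintype.sum_pow, hq, one_pow]

theorem sum_fin_succ_fun_eq_sum_cons {M : Type*} [AddCommMonoid M] {r : ℕ}
    (F : (Fin (r + 1) → ι) → M) :
    ∑ s, F s = ∑ j, ∑ s : Fin r → ι, F (Fin.cons j s) := by
  rw [← (Fin.consEquiv fun _ => ι).sum_comp, Fintype.sum_prod_type]
  rfl

theorem sum_prod_mul_norm_sum_sq {q : ι → ℝ} (hq : ∑ j, q j = 1) {g : ι → E}
    (hg : ∑ j, q j • g j = 0) (r : ℕ) :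
    ∑ s : Fin r → ι, (∏ i, q (s i)) * ‖∑ i, g (s i)‖ ^ 2 = r * ∑ j, q j * ‖g j‖ ^ 2 := by
  induction r with
  | zero => simp
  | succ r ih =>
    set w : (Fin r → ι) → ℝ := fun s => ∏ i, q (s i)
    set S : (Fin r → ι) → E := fun s => ∑ i, g (s i)
    have cross : ∑ j, ∑ s, q j * w s * (2 * inner ℝ (g j) (S s)) = 0 := by
      have : ∑ j, ∑ s, q j * w s * (2 * inner ℝ (g j) (S s))
          = 2 * inner ℝ (∑ j, q j • g j) (∑ s, w s • S s) := by
        simp only [sum_inner, inner_sum, real_inner_smul_left, real_inner_smul_right, mul_sum]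
        rw [Finset.sum_comm]
        exact sum_congr rfl fun _ _ => sum_congr rfl fun _ _ => by ring
      rw [this, hg, inner_zero_left, mul_zero]
    have expand : ∀ j s, q j * w s * ‖g j + S s‖ ^ 2 = w s * (q j * ‖g j‖ ^ 2)
        + q j * w s * (2 * inner ℝ (g j) (S s)) + q j * (w s * ‖S s‖ ^ 2) := by
      intro j s; rw [norm_add_sq_real]; ring
    rw [sum_fin_succ_fun_eq_sum_cons]
    simp only [Fin.prod_univ_succ, Fin.sum_univ_succ, Fin.cons_zero, Fin.cons_succ]
    change ∑ j, ∑ s, q j * w s * ‖g j + S s‖ ^ 2 = _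
    simp only [expand, sum_add_distrib, ← sum_mul, ← mul_sum, cross]
    rw [ih, sum_prod_eq_one hq, hq]
    push_cast; ring

theorem sum_mul_norm_sub_mean_sq {q : ι → ℝ} (hq : ∑ j, q j = 1) (f : ι → E) :
    ∑ j, q j * ‖f j - ∑ k, q k • f k‖ ^ 2 = ∑ j, q j * ‖f j‖ ^ 2 - ‖∑ k, q k • f k‖ ^ 2 := by
  set μ := ∑ k, q k • f k
  have cross : ∑ j, q j * (2 * inner ℝ (f j) μ) = 2 * ‖μ‖ ^ 2 := by
    simp only [← real_inner_self_eq_norm_sq, μ, sum_inner, real_inner_smul_left, mul_sum]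
    exact sum_congr rfl fun _ _ => by ring
  simp only [norm_sub_sq_real, mul_sub, mul_add, sum_add_distrib, sum_sub_distrib,
    ← sum_mul, hq, one_mul, cross]
  ring

theorem sum_prod_mul_norm_sum_sub_mean_sq_le {q : ι → ℝ} (hq : ∑ j, q j = 1) (f : ι → E)
    (r : ℕ) :
    ∑ s : Fin r → ι, (∏ i, q (s i)) * ‖∑ i, (f (s i) - ∑ k, q k • f k)‖ ^ 2
      ≤ r * ∑ j, q j * ‖f j‖ ^ 2 := by
  have hmean : ∑ j, q j • (f j - ∑ k, q k • f k) = 0 := by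
    simp only [smul_sub, sum_sub_distrib, ← sum_smul, hq, one_smul, sub_self]
  rw [sum_prod_mul_norm_sum_sq hq hmean, sum_mul_norm_sub_mean_sq hq]
  exact mul_le_mul_of_nonneg_left (sub_le_self _ (sq_nonneg _)) r.cast_nonneg

end IidSums

theorem one_sub_le_sum_ite_of_sum_mul_le {α : Type*} [Fintype α] {w Z : α → ℝ} {P : α → Prop}
    [DecidablePred P] {c δ : ℝ} (hw : ∀ s, 0 ≤ w s) (hw1 : ∑ s, w s = 1) (hc : 0 < c)
    (hZ : ∀ s, 0 ≤ Z s) (hPZ : ∀ s, ¬ P s → c ≤ Z s) (hE : ∑ s, w s * Z s ≤ δ * c) :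
    1 - δ ≤ ∑ s, if P s then w s else 0 := by
  have pointwise : ∀ s, c * w s ≤ c * (if P s then w s else 0) + w s * Z s := by
    intro s
    by_cases h : P s
    · simp [h, mul_nonneg (hw s) (hZ s)]
    · simpa [h, mul_comm] using mul_le_mul_of_nonneg_left (hPZ s h) (hw s)
  have := sum_le_sum fun s (_ : s ∈ univ) => pointwise s
  rw [← mul_sum, hw1, sum_add_distrib, ← mul_sum] at this
  exact le_of_mul_le_mul_left (by linarith) hc

theorem sum_mul_le_of_mul_le {ι : Type*} (s : Finset ι) {d T : ι → ℝ} {b c K : ℝ}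
    (hd : ∀ j ∈ s, 0 ≤ d j) (hc : 0 ≤ c) (hb : 0 ≤ b) (hK : 0 ≤ K)
    (hT : ∀ j ∈ s, c * T j ≤ K) (hds : ∑ j ∈ s, d j ≤ c * b) :
    ∑ j ∈ s, d j * T j ≤ b * K := by
  rcases hc.eq_or_lt with rfl | hc
  · rw [zero_mul] at hds
    rw [sum_eq_zero fun j hj => by rw [(sum_eq_zero_iff_of_nonneg hd).1 (hds.antisymm
      (sum_nonneg hd)) j hj, zero_mul]]
    positivity
  · calc ∑ j ∈ s, d j * T j ≤ ∑ j ∈ s, d j * (K / c) :=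
          sum_le_sum fun j hj => mul_le_mul_of_nonneg_left
            ((le_div_iff₀' hc).2 (hT j hj)) (hd j hj)
      _ = (∑ j ∈ s, d j) * (K / c) := by rw [sum_mul]
      _ ≤ c * b * (K / c) := by gcongr
      _ = b * K := by field_simp

noncomputable def frobVec {m n : ℕ} :
    Matrix (Fin m) (Fin n) ℂ ≃ₗ[ℝ] EuclideanSpace ℂ (Fin m × Fin n) :=
  (Matrix.ofLinearEquiv ℝ).symm ≪≫ₗ (LinearEquiv.curry ℝ ℂ (Fin m) (Fin n)).symm ≪≫ₗ
    (WithLp.linearEquiv 2 ℝ (Fin m × Fin n → ℂ)).symm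

section FrobNorm

variable {m n : ℕ}

theorem norm_frobVec (M : Matrix (Fin m) (Fin n) ℂ) : ‖frobVec M‖ = frobNorm M := by
  rw [EuclideanSpace.norm_eq, Fintype.sum_prod_type]
  rfl

theorem frobNorm_nonneg (M : Matrix (Fin m) (Fin n) ℂ) : 0 ≤ frobNorm M :=
  Real.sqrt_nonneg _

theorem rowNorm_nonneg (M : Matrix (Fin m) (Fin n) ℂ) (i : Fin m) : 0 ≤ rowNorm M i :=
  Real.sqrt_nonneg _

theorem frobNorm_pos {M : Matrix (Fin m) (Fin n) ℂ} (hM : M ≠ 0) : 0 < frobNorm M := by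
  rw [← norm_frobVec, norm_pos_iff]
  exact (map_ne_zero_iff _ frobVec.injective).2 hM

theorem frobNorm_add_le (M N : Matrix (Fin m) (Fin n) ℂ) :
    frobNorm (M + N) ≤ frobNorm M + frobNorm N := by
  simpa only [← norm_frobVec, map_add] using norm_add_le _ _

theorem frobNorm_sum_le {ι : Type*} (s : Finset ι) (M : ι → Matrix (Fin m) (Fin n) ℂ) :
    frobNorm (∑ i ∈ s, M i) ≤ ∑ i ∈ s, frobNorm (M i) := by
  simpa only [← norm_frobVec, map_sum] using norm_sum_le _ _

theorem frobNorm_smul (c : ℝ) (M : Matrix (Fin m) (Fin n) ℂ) :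
    frobNorm (c • M) = |c| * frobNorm M := by
  rw [← norm_frobVec, map_smul, norm_smul, Real.norm_eq_abs, norm_frobVec]

theorem rowNorm_sq (M : Matrix (Fin m) (Fin n) ℂ) (i : Fin m) :
    rowNorm M i ^ 2 = ∑ j, ‖M i j‖ ^ 2 :=
  Real.sq_sqrt (sum_nonneg fun _ _ => sq_nonneg _)

theorem frobNorm_sq (M : Matrix (Fin m) (Fin n) ℂ) :
    frobNorm M ^ 2 = ∑ i, rowNorm M i ^ 2 := by
  simp only [rowNorm_sq]
  exact Real.sq_sqrt (sum_nonneg fun _ _ => sum_nonneg fun _ _ => sq_nonneg _)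

theorem frobNorm_vecMulVec_star {n' : ℕ} (X : Matrix (Fin m) (Fin n) ℂ)
    (Y : Matrix (Fin m) (Fin n') ℂ) (j : Fin m) :
    frobNorm (vecMulVec (star (X j)) (Y j)) = rowNorm X j * rowNorm Y j := by
  rw [rowNorm, rowNorm, ← Real.sqrt_mul (sum_nonneg fun _ _ => sq_nonneg _), sum_mul_sum]
  simp [frobNorm, vecMulVec_apply, mul_pow]

theorem sum_prod_mul_frobNorm_sum_sub_mean_sq_le {n' : ℕ} {q : Fin m → ℝ}
    (hq : ∑ j, q j = 1) (M : Fin m → Matrix (Fin n) (Fin n') ℂ) (r : ℕ) :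
    ∑ s : Fin r → Fin m, (∏ i, q (s i)) * frobNorm (∑ i, (M (s i) - ∑ j, q j • M j)) ^ 2
      ≤ r * ∑ j, q j * frobNorm (M j) ^ 2 := by
  simpa only [← norm_frobVec, map_sum, map_sub, map_smul] using
    sum_prod_mul_norm_sum_sub_mean_sq_le hq (fun j => frobVec (M j)) r

end FrobNorm

theorem conjTranspose_mul_eq_sum_vecMulVec {l m n α : Type*} [Fintype m]
    [NonUnitalNonAssocSemiring α] [Star α] (A : Matrix m l α) (B : Matrix m n α) :
    Aᴴ * B = ∑ k, vecMulVec (star (A k)) (B k) := by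
  ext a b
  simp [mul_apply, vecMulVec_apply, Matrix.sum_apply]

noncomputable def sampledTerm {m n n' : ℕ} (X : Matrix (Fin m) (Fin n) ℂ)
    (Y : Matrix (Fin m) (Fin n') ℂ) (p : Fin m → ℝ) (Γ : Fin m → Prop) [DecidablePred Γ]
    (j : Fin m) : Matrix (Fin n) (Fin n') ℂ :=
  if 0 < p j ∧ ¬ Γ j then (p j)⁻¹ • vecMulVec (star (X j)) (Y j) else 0

section Sketch

variable {m n n' r : ℕ} (p : Fin m → ℝ) (Γ : Fin m → Prop) [DecidablePred Γ]

theorem truncSketch_mul_row (s : Fin r → Fin m) (X : Matrix (Fin m) (Fin n) ℂ) (i : Fin r) :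
    (truncSketch r p Γ s * X) i
      = (if 0 < p (s i) ∧ ¬ Γ (s i) then 1 / Real.sqrt (r * p (s i)) else 0 : ℝ) • X (s i) := by
  ext a
  by_cases h : 0 < p (s i) ∧ ¬ Γ (s i) <;> simp [mul_apply, truncSketch, h, Complex.real_smul]

theorem conjTranspose_truncSketch_mul_truncSketch (s : Fin r → Fin m)
    (X : Matrix (Fin m) (Fin n) ℂ) (Y : Matrix (Fin m) (Fin n') ℂ) :
    Xᴴ * (truncSketch r p Γ s)ᴴ * (truncSketch r p Γ s * Y)
      = (r : ℝ)⁻¹ • ∑ i, sampledTerm X Y p Γ (s i) := by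
  rw [← conjTranspose_mul, conjTranspose_mul_eq_sum_vecMulVec, smul_sum]
  refine sum_congr rfl fun i _ => ?_
  simp only [truncSketch_mul_row, sampledTerm, star_smul, star_trivial, smul_vecMulVec,
    vecMulVec_smul, smul_smul]
  split_ifs with h
  · rw [smul_smul, div_mul_div_comm, one_mul,
      Real.mul_self_sqrt (mul_nonneg r.cast_nonneg h.1.le), one_div, mul_inv]
  · simp

end Sketch

section Bounds

variable {m n n' : ℕ} {X : Matrix (Fin m) (Fin n) ℂ} {Y : Matrix (Fin m) (Fin n') ℂ}
  {p : Fin m → ℝ} {Γ : Fin m → Prop} [DecidablePred Γ] {ε φ : ℝ}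

theorem rowNorm_sq_le_of_le (hφ : 0 < φ) (hX : X ≠ 0) {j : Fin m} {q : ℝ}
    (h : (1 / φ) * (rowNorm X j ^ 2 / frobNorm X ^ 2) ≤ q) :
    rowNorm X j ^ 2 ≤ φ * q * frobNorm X ^ 2 := by
  have := frobNorm_pos hX
  rw [one_div_mul_eq_div, div_div, div_le_iff₀ (by positivity)] at h
  linarith

theorem frobNorm_sampledTerm (j : Fin m) :
    frobNorm (sampledTerm X Y p Γ j)
      = if 0 < p j ∧ ¬ Γ j then rowNorm X j * rowNorm Y j / p j else 0 := by
  unfold sampledTerm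
  split_ifs with h
  · rw [frobNorm_smul, frobNorm_vecMulVec_star, abs_of_pos (inv_pos.2 h.1), inv_mul_eq_div]
  · simp [frobNorm]

theorem smul_sampledTerm_sub (j : Fin m) :
    p j • sampledTerm X Y p Γ j - vecMulVec (star (X j)) (Y j)
      = if 0 < p j ∧ ¬ Γ j then 0 else -vecMulVec (star (X j)) (Y j) := by
  unfold sampledTerm
  split_ifs with h
  · rw [smul_smul, mul_inv_cancel₀ h.1.ne', one_smul, sub_self]
  · rw [smul_zero, zero_sub]

theorem sqrt_mul_frobNorm_sampledTerm_le (hφ : 0 < φ) (hX : X ≠ 0) {j : Fin m}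
    (hrow : rowNorm X j ^ 2 ≤ φ * p j * frobNorm X ^ 2)
    (hΓ : Γ j ↔ frobNorm Y * rowNorm X j ≤ Real.sqrt (2 * φ * ε) * frobNorm X * rowNorm Y j) :
    Real.sqrt (2 * ε) * frobNorm (sampledTerm X Y p Γ j)
      ≤ Real.sqrt φ * frobNorm X * frobNorm Y := by
  have hFX := frobNorm_pos hX
  have hFY := frobNorm_nonneg Y
  have ha := rowNorm_nonneg X j
  rw [frobNorm_sampledTerm]
  split_ifs with h
  · have hkept : Real.sqrt (2 * φ * ε) * frobNorm X * rowNorm Y j < frobNorm Y * rowNorm X j :=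
      lt_of_not_ge (mt hΓ.2 h.2)
    have hsqrt : Real.sqrt (2 * φ * ε) = Real.sqrt (2 * ε) * Real.sqrt φ := by
      rw [mul_right_comm, Real.sqrt_mul' _ hφ.le]
    have hφφ := Real.mul_self_sqrt hφ.le
    have key : Real.sqrt φ * frobNorm X * (Real.sqrt (2 * ε) * (rowNorm X j * rowNorm Y j))
        ≤ Real.sqrt φ * frobNorm X * (Real.sqrt φ * frobNorm X * frobNorm Y * p j) :=
      calc _ = rowNorm X j * (Real.sqrt (2 * φ * ε) * frobNorm X * rowNorm Y j) := by
              rw [hsqrt]; ring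
        _ ≤ rowNorm X j * (frobNorm Y * rowNorm X j) := by gcongr
        _ = frobNorm Y * rowNorm X j ^ 2 := by ring
        _ ≤ frobNorm Y * (φ * p j * frobNorm X ^ 2) := by gcongr
        _ = _ := by linear_combination (-(frobNorm Y * p j * frobNorm X ^ 2)) * hφφ
    rw [mul_div_assoc', div_le_iff₀ h.1]
    exact le_of_mul_le_mul_left key (by positivity)
  · rw [mul_zero]; positivity

theorem mul_frobNorm_sampledTerm_sq_le (hφ : 0 ≤ φ) {j : Fin m}
    (hrow : rowNorm X j ^ 2 ≤ φ * p j * frobNorm X ^ 2) :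
    p j * frobNorm (sampledTerm X Y p Γ j) ^ 2 ≤ φ * frobNorm X ^ 2 * rowNorm Y j ^ 2 := by
  rw [frobNorm_sampledTerm]
  split_ifs with h
  · have hp := h.1
    rw [show p j * (rowNorm X j * rowNorm Y j / p j) ^ 2
        = rowNorm X j ^ 2 / p j * rowNorm Y j ^ 2 by field_simp]
    gcongr
    rw [div_le_iff₀ hp]
    linarith
  · rw [zero_pow two_ne_zero, mul_zero]
    positivity

theorem frobNorm_smul_sampledTerm_sub_le (hφ : 0 ≤ φ) (hY : Y ≠ 0) {j : Fin m}
    (hrow : rowNorm X j ^ 2 ≤ φ * p j * frobNorm X ^ 2)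
    (hΓ : Γ j ↔ frobNorm Y * rowNorm X j ≤ Real.sqrt (2 * φ * ε) * frobNorm X * rowNorm Y j) :
    frobNorm (p j • sampledTerm X Y p Γ j - vecMulVec (star (X j)) (Y j))
      ≤ Real.sqrt (2 * φ * ε) * frobNorm X * rowNorm Y j ^ 2 / frobNorm Y := by
  have hFY := frobNorm_pos hY
  have hRHS : 0 ≤ Real.sqrt (2 * φ * ε) * frobNorm X * rowNorm Y j ^ 2 / frobNorm Y := by
    have := frobNorm_nonneg X; positivity
  rw [smul_sampledTerm_sub]
  split_ifs with h
  · simpa [frobNorm] using hRHS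
  · rw [← neg_one_smul ℝ, frobNorm_smul, abs_neg, abs_one, one_mul, frobNorm_vecMulVec_star]
    rw [not_and_or, not_lt, not_not] at h
    rcases h with hp | hΓj
    · have hsq : rowNorm X j ^ 2 ≤ 0 := hrow.trans
        (mul_nonpos_of_nonpos_of_nonneg (mul_nonpos_of_nonneg_of_nonpos hφ hp) (sq_nonneg _))
      have hzero : rowNorm X j = 0 :=
        pow_eq_zero_iff two_ne_zero |>.1 (hsq.antisymm (sq_nonneg _))
      rwa [hzero, zero_mul]
    · rw [le_div_iff₀ hFY]
      calc rowNorm X j * rowNorm Y j * frobNorm Y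
          = frobNorm Y * rowNorm X j * rowNorm Y j := by ring
        _ ≤ Real.sqrt (2 * φ * ε) * frobNorm X * rowNorm Y j * rowNorm Y j :=
          mul_le_mul_of_nonneg_right (hΓ.1 hΓj) (rowNorm_nonneg Y j)
        _ = _ := by ring

end Bounds

section Moments

variable {m n n' : ℕ} {X : Matrix (Fin m) (Fin n) ℂ} {Y : Matrix (Fin m) (Fin n') ℂ}
  {p q : Fin m → ℝ} {Γ : Fin m → Prop} [DecidablePred Γ] {ε φ : ℝ}

theorem frobNorm_sum_smul_sampledTerm_sub_le (hε : 0 ≤ ε) (hφ : 0 < φ) (hX : X ≠ 0)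
    (hY : Y ≠ 0) (hrow : ∀ j, rowNorm X j ^ 2 ≤ φ * p j * frobNorm X ^ 2)
    (hTV : ∑ j, |q j - p j| ≤ 2 * ε)
    (hΓ : ∀ j, Γ j ↔ frobNorm Y * rowNorm X j ≤ Real.sqrt (2 * φ * ε) * frobNorm X * rowNorm Y j) :
    frobNorm (∑ j, q j • sampledTerm X Y p Γ j - Xᴴ * Y)
      ≤ 2 * Real.sqrt (2 * ε) * Real.sqrt φ * frobNorm X * frobNorm Y := by
  have hFY := frobNorm_pos hY
  have hsplit : ∑ j, q j • sampledTerm X Y p Γ j - Xᴴ * Y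
      = ∑ j, (q j - p j) • sampledTerm X Y p Γ j
        + ∑ j, (p j • sampledTerm X Y p Γ j - vecMulVec (star (X j)) (Y j)) := by
    rw [conjTranspose_mul_eq_sum_vecMulVec, ← sum_add_distrib, ← sum_sub_distrib]
    exact sum_congr rfl fun j _ => by rw [sub_smul]; abel
  have hfluct : frobNorm (∑ j, (q j - p j) • sampledTerm X Y p Γ j)
      ≤ Real.sqrt (2 * ε) * (Real.sqrt φ * frobNorm X * frobNorm Y) := by
    refine (frobNorm_sum_le _ _).trans ?_
    simp only [frobNorm_smul]
    refine sum_mul_le_of_mul_le _ (fun _ _ => abs_nonneg _) (Real.sqrt_nonneg _)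
      (Real.sqrt_nonneg _) (by have := frobNorm_nonneg X; positivity)
      (fun j _ => sqrt_mul_frobNorm_sampledTerm_le hφ hX (hrow j) (hΓ j)) ?_
    rwa [Real.mul_self_sqrt (by positivity)]
  have htrunc : frobNorm (∑ j, (p j • sampledTerm X Y p Γ j - vecMulVec (star (X j)) (Y j)))
      ≤ Real.sqrt (2 * ε) * Real.sqrt φ * frobNorm X * frobNorm Y :=
    calc _ ≤ ∑ j, Real.sqrt (2 * φ * ε) * frobNorm X * rowNorm Y j ^ 2 / frobNorm Y :=
          (frobNorm_sum_le _ _).trans <| sum_le_sum fun j _ =>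
            frobNorm_smul_sampledTerm_sub_le hφ.le hY (hrow j) (hΓ j)
      _ = Real.sqrt (2 * ε) * Real.sqrt φ * frobNorm X * frobNorm Y := by
          rw [← sum_div, ← mul_sum, ← frobNorm_sq, mul_right_comm 2, Real.sqrt_mul' _ hφ.le]
          field_simp
  rw [hsplit]
  refine (frobNorm_add_le _ _).trans ?_
  linarith

theorem sum_mul_frobNorm_sampledTerm_sq_le (hε : 0 ≤ ε) (hφ : 0 < φ) (hX : X ≠ 0)
    (hrow : ∀ j, rowNorm X j ^ 2 ≤ φ * p j * frobNorm X ^ 2)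
    (hTV : ∑ j, |q j - p j| ≤ 2 * ε)
    (hΓ : ∀ j, Γ j ↔ frobNorm Y * rowNorm X j ≤ Real.sqrt (2 * φ * ε) * frobNorm X * rowNorm Y j) :
    ∑ j, q j * frobNorm (sampledTerm X Y p Γ j) ^ 2
      ≤ 2 * φ * frobNorm X ^ 2 * frobNorm Y ^ 2 := by
  have hK : 0 ≤ φ * frobNorm X ^ 2 * frobNorm Y ^ 2 := by positivity
  have hmain : ∑ j, p j * frobNorm (sampledTerm X Y p Γ j) ^ 2
      ≤ φ * frobNorm X ^ 2 * frobNorm Y ^ 2 :=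
    calc _ ≤ ∑ j, φ * frobNorm X ^ 2 * rowNorm Y j ^ 2 :=
          sum_le_sum fun j _ => mul_frobNorm_sampledTerm_sq_le hφ.le (hrow j)
      _ = _ := by rw [← mul_sum, ← frobNorm_sq]
  have hdev : ∑ j, |q j - p j| * frobNorm (sampledTerm X Y p Γ j) ^ 2
      ≤ 1 * (φ * frobNorm X ^ 2 * frobNorm Y ^ 2) := by
    refine sum_mul_le_of_mul_le (c := 2 * ε) _ (fun _ _ => abs_nonneg _) (by positivity)
      zero_le_one hK (fun j _ => ?_) (by rwa [mul_one])
    have h := sqrt_mul_frobNorm_sampledTerm_le hφ hX (hrow j) (hΓ j)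
    have h0 := mul_nonneg (Real.sqrt_nonneg (2 * ε)) (frobNorm_nonneg (sampledTerm X Y p Γ j))
    calc 2 * ε * frobNorm (sampledTerm X Y p Γ j) ^ 2
        = (Real.sqrt (2 * ε) * frobNorm (sampledTerm X Y p Γ j)) ^ 2 := by
          rw [mul_pow, Real.sq_sqrt (by positivity)]
      _ ≤ (Real.sqrt φ * frobNorm X * frobNorm Y) ^ 2 := pow_le_pow_left₀ h0 h 2
      _ = _ := by rw [mul_pow, mul_pow, Real.sq_sqrt hφ.le]
  calc _ ≤ ∑ j, (p j * frobNorm (sampledTerm X Y p Γ j) ^ 2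
          + |q j - p j| * frobNorm (sampledTerm X Y p Γ j) ^ 2) :=
        sum_le_sum fun j _ => by
          rw [← add_mul]
          exact mul_le_mul_of_nonneg_right (by linarith [le_abs_self (q j - p j)]) (sq_nonneg _)
    _ ≤ _ := by rw [sum_add_distrib]; linarith

end Moments

theorem frobNorm_sketch_sub_le {m n n' r : ℕ} (hr : r ≠ 0) (p : Fin m → ℝ) (Γ : Fin m → Prop)
    [DecidablePred Γ] (s : Fin r → Fin m) (X : Matrix (Fin m) (Fin n) ℂ)
    (Y : Matrix (Fin m) (Fin n') ℂ) (μ : Matrix (Fin n) (Fin n') ℂ) :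
    frobNorm (Xᴴ * (truncSketch r p Γ s)ᴴ * (truncSketch r p Γ s * Y) - Xᴴ * Y)
      ≤ (r : ℝ)⁻¹ * frobNorm (∑ i, (sampledTerm X Y p Γ (s i) - μ)) + frobNorm (μ - Xᴴ * Y) := by
  have hdecomp : (r : ℝ)⁻¹ • ∑ i, sampledTerm X Y p Γ (s i) - Xᴴ * Y
      = (r : ℝ)⁻¹ • ∑ i, (sampledTerm X Y p Γ (s i) - μ) + (μ - Xᴴ * Y) := by
    rw [sum_sub_distrib, sum_const, card_univ, Fintype.card_fin, smul_sub,
      ← Nat.cast_smul_eq_nsmul ℝ, smul_smul, inv_mul_cancel₀ (Nat.cast_ne_zero.2 hr), one_smul]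
    abel
  rw [conjTranspose_truncSketch_mul_truncSketch, hdecomp]
  refine (frobNorm_add_le _ _).trans_eq ?_
  rw [frobNorm_smul, abs_of_nonneg (by positivity)]

theorem biased_matrix_mult_sketch_concentration_general
    (m n n' r : ℕ) (hr : 1 ≤ r)
    (X : Matrix (Fin m) (Fin n) ℂ) (Y : Matrix (Fin m) (Fin n') ℂ)
    (hX : X ≠ 0) (hY : Y ≠ 0)
    (ε : ℝ) (hε : ε ∈ Set.Icc (0:ℝ) 1) (φ : ℝ) (hφ : 1 ≤ φ) (δ : ℝ) (hδ : 0 < δ)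
    (p ptilde : Fin m → ℝ)
    (hpt_nonneg : ∀ j, 0 ≤ ptilde j) (hpt_sum : ∑ j, ptilde j = 1)
    (hp_over : ∀ j, (1 / φ) * (rowNorm X j ^ 2 / frobNorm X ^ 2) ≤ p j)
    (hTV : (1/2) * ∑ j, |ptilde j - p j| ≤ ε)
    (Γ : Fin m → Prop) [DecidablePred Γ]
    (hΓ : ∀ j, Γ j ↔ frobNorm Y * rowNorm X j ≤ Real.sqrt (2 * φ * ε) * frobNorm X * rowNorm Y j) :
    1 - δ ≤ ∑ s : Fin r → Fin m,
      if frobNorm (Xᴴ * (truncSketch r p Γ s)ᴴ * (truncSketch r p Γ s * Y) - Xᴴ * Y)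
          ≤ (2 * Real.sqrt (2 * ε) + Real.sqrt (2 / (r * δ))) * Real.sqrt φ
              * frobNorm X * frobNorm Y
      then ∏ i, ptilde (s i) else 0 := by
  have hφ0 : 0 < φ := one_pos.trans_le hφ
  have hr0 : (0 : ℝ) < r := Nat.cast_pos.2 hr
  have hrow j := rowNorm_sq_le_of_le hφ0 hX (hp_over j)
  have hTV2 : ∑ j, |ptilde j - p j| ≤ 2 * ε := by linarith
  have hFX := frobNorm_pos hX
  have hFY := frobNorm_pos hY
  set μ := ∑ j, ptilde j • sampledTerm X Y p Γ j
  have hthreshold : δ * (r * (Real.sqrt (2 / (r * δ)) * Real.sqrt φ * frobNorm X * frobNorm Y)) ^ 2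
      = r * (2 * φ * frobNorm X ^ 2 * frobNorm Y ^ 2) := by
    rw [mul_pow, mul_pow, mul_pow, mul_pow, Real.sq_sqrt (by positivity), Real.sq_sqrt hφ0.le]
    field_simp
  have hmoment := (sum_prod_mul_frobNorm_sum_sub_mean_sq_le hpt_sum (sampledTerm X Y p Γ) r).trans
    (mul_le_mul_of_nonneg_left (sum_mul_frobNorm_sampledTerm_sq_le hε.1 hφ0 hX hrow hTV2 hΓ)
      hr0.le)
  rw [← hthreshold] at hmoment
  refine one_sub_le_sum_ite_of_sum_mul_le (fun s => prod_nonneg fun i _ => hpt_nonneg _)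
    (sum_prod_eq_one hpt_sum r) (by positivity) (fun s => sq_nonneg _) (fun s hs => ?_) hmoment
  have herr := frobNorm_sketch_sub_le (by omega) p Γ s X Y μ
  have hbias := frobNorm_sum_smul_sampledTerm_sub_le hε.1 hφ0 hX hY hrow hTV2 hΓ
  refine pow_le_pow_left₀ (by positivity) ?_ 2
  rw [← le_inv_mul_iff₀ hr0]
  linarith

/-- **Biased matrix multiplication sketch: concentration (Theorem 1, formal version).**
Let `Σ̄` be the truncated `(r,ε,φ)`-approximate importance sketch of `X` (rows with sampled
index in `Γ` zeroed out).  Then for any `δ > 0`, with probability at least `1−δ` over the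
i.i.d. samples from `p̃`,
`‖X† Σ̄† Σ̄ Y − X† Y‖_F ≤ (2√(2ε) + √(2/(rδ)))·√φ·‖X‖_F·‖Y‖_F`. -/
theorem biased_matrix_mult_sketch_concentration
    (m n n' r : ℕ) (hr : 1 ≤ r)
    (X : Matrix (Fin m) (Fin n) ℂ) (Y : Matrix (Fin m) (Fin n') ℂ)
    (hX : X ≠ 0) (hY : Y ≠ 0)
    (ε : ℝ) (hε : ε ∈ Set.Icc (0:ℝ) 1) (φ : ℝ) (hφ : 1 ≤ φ) (δ : ℝ) (hδ : 0 < δ)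
    (p ptilde : Fin m → ℝ)
    (hp_nonneg : ∀ j, 0 ≤ p j) (hp_sum : ∑ j, p j = 1)
    (hpt_nonneg : ∀ j, 0 ≤ ptilde j) (hpt_sum : ∑ j, ptilde j = 1)
    (hp_over : ∀ j, (1 / φ) * (rowNorm X j ^ 2 / frobNorm X ^ 2) ≤ p j)
    (hTV : (1/2) * ∑ j, |ptilde j - p j| ≤ ε)
    (Γ : Fin m → Prop) [DecidablePred Γ]
    (hΓ : ∀ j, Γ j ↔ frobNorm Y * rowNorm X j ≤ Real.sqrt (2 * φ * ε) * frobNorm X * rowNorm Y j) :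
    1 - δ ≤ ∑ s : Fin r → Fin m,
      if frobNorm (Xᴴ * (truncSketch r p Γ s)ᴴ * (truncSketch r p Γ s * Y) - Xᴴ * Y)
          ≤ (2 * Real.sqrt (2 * ε) + Real.sqrt (2 / (r * δ))) * Real.sqrt φ
              * frobNorm X * frobNorm Y
      then ∏ i, ptilde (s i) else 0 :=
  biased_matrix_mult_sketch_concentration_general m n n' r hr X Y hX hY ε hε φ hφ δ hδ p ptilde
    hpt_nonneg hpt_sum hp_over hTV Γ hΓ
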